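/- arXiv:1011.2865 — 4 statements merged into one kernel-verified Lean document; each statement's English description precedes it below -/
import Mathlib

section
/- Let c, d ∈ ℝ with d ≠ 0 be given. For an impulse time sequence {t_k} let N(t,s) denote the number of impulse times in the half-open interval (s,t] and N*(t,s) the number of impulse times in the closed interval [s,t]. Let S[μ,λ] denote the class of impulse time sequences satisfying −d·N(t,s) − (c−λ)(t−s) ≤ μ for all t ≥ s ≥ t_0, and let S*[μ,λ] denote the class of sequences satisfying the same inequality with N*(t,s) in place of N(t,s). Then S[μ,λ] = S*[μ,λ] for all μ, λ > 0. -/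
open Set

noncomputable section

/-- An impulse time sequence, represented by its set of impulse times: a strictly increasing
(finite, or infinite and unbounded) collection of times in `(t₀, ∞)` with no finite
accumulation point, i.e. a locally finite subset of `(t₀, ∞)`. -/
def ImpulseTimes (t₀ : ℝ) (T : Set ℝ) : Prop :=
  (∀ t ∈ T, t₀ < t) ∧ ∀ a b : ℝ, (T ∩ Icc a b).Finite

/-- `N(t,s)`: the number of impulse times in the half-open interval `(s,t]`. -/
def Ncount (T : Set ℝ) (s t : ℝ) : ℕ := (T ∩ Ioc s t).ncard

/-- `N*(t,s)`: the number of impulse times in the closed interval `[s,t]`. -/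
def NcountStar (T : Set ℝ) (s t : ℝ) : ℕ := (T ∩ Icc s t).ncard

/-- A locally finite set has an empty gap just to the right of any point. -/
lemma gap_right (T : Set ℝ) (hT : ∀ a b : ℝ, (T ∩ Icc a b).Finite) (s : ℝ) :
    ∃ ε > 0, T ∩ Ioo s (s + ε) = ∅ := by
  classical
  by_cases h : ((hT s (s + 1)).toFinset.filter (fun x => s < x)).Nonempty
  · set F := (hT s (s + 1)).toFinset.filter (fun x => s < x) with hF
    have hm : F.min' h ∈ F := F.min'_mem h
    have hm1 : F.min' h ∈ (hT s (s + 1)).toFinset ∧ s < F.min' h := Finset.mem_filter.mp hm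
    have hm2 : F.min' h ∈ T ∩ Icc s (s + 1) := (Set.Finite.mem_toFinset _).mp hm1.1
    refine ⟨F.min' h - s, by linarith [hm1.2], ?_⟩
    rw [Set.eq_empty_iff_forall_notMem]
    rintro x ⟨hxT, hx⟩
    rw [mem_Ioo] at hx
    have hx3 : x ∈ F := by
      refine Finset.mem_filter.mpr ⟨?_, hx.1⟩
      rw [Set.Finite.mem_toFinset]
      exact ⟨hxT, hx.1.le, by linarith [hx.2, hm2.2.2]⟩
    linarith [F.min'_le x hx3, hx.2]
  · refine ⟨1, one_pos, ?_⟩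
    rw [Set.eq_empty_iff_forall_notMem]
    rintro x ⟨hxT, hx⟩
    rw [mem_Ioo] at hx
    exact h ⟨x, Finset.mem_filter.mpr ⟨(Set.Finite.mem_toFinset _).mpr
      ⟨hxT, hx.1.le, by linarith [hx.2]⟩, hx.1⟩⟩

/-- A locally finite set has an empty gap just to the left of any point. -/
lemma gap_left (T : Set ℝ) (hT : ∀ a b : ℝ, (T ∩ Icc a b).Finite) (s : ℝ) :
    ∃ ε > 0, T ∩ Ioo (s - ε) s = ∅ := by
  classical
  by_cases h : ((hT (s - 1) s).toFinset.filter (fun x => x < s)).Nonempty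
  · set F := (hT (s - 1) s).toFinset.filter (fun x => x < s) with hF
    have hm : F.max' h ∈ F := F.max'_mem h
    have hm1 : F.max' h ∈ (hT (s - 1) s).toFinset ∧ F.max' h < s := Finset.mem_filter.mp hm
    have hm2 : F.max' h ∈ T ∩ Icc (s - 1) s := (Set.Finite.mem_toFinset _).mp hm1.1
    refine ⟨s - F.max' h, by linarith [hm1.2], ?_⟩
    rw [Set.eq_empty_iff_forall_notMem]
    rintro x ⟨hxT, hx⟩
    rw [mem_Ioo] at hx
    have hx1 : F.max' h < x := by linarith [hx.1]
    have hx3 : x ∈ F := by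
      refine Finset.mem_filter.mpr ⟨?_, hx.2⟩
      rw [Set.Finite.mem_toFinset]
      exact ⟨hxT, by linarith [hm2.2.1], hx.2.le⟩
    linarith [F.le_max' x hx3]
  · refine ⟨1, one_pos, ?_⟩
    rw [Set.eq_empty_iff_forall_notMem]
    rintro x ⟨hxT, hx⟩
    rw [mem_Ioo] at hx
    exact h ⟨x, Finset.mem_filter.mpr ⟨(Set.Finite.mem_toFinset _).mpr
      ⟨hxT, by linarith [hx.1], hx.2.le⟩, hx.2⟩⟩

/-- If `s ∉ T` then the closed and half-open counts agree. -/
lemma count_eq_of_notMem (T : Set ℝ) (s t : ℝ) (hs : s ∉ T) :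
    NcountStar T s t = Ncount T s t := by
  unfold NcountStar Ncount
  congr 1
  ext x
  simp only [mem_inter_iff, mem_Icc, mem_Ioc]
  constructor
  · rintro ⟨hxT, hx1, hx2⟩
    refine ⟨hxT, lt_of_le_of_ne hx1 ?_, hx2⟩
    rintro rfl; exact hs hxT
  · rintro ⟨hxT, hx1, hx2⟩
    exact ⟨hxT, hx1.le, hx2⟩

/-- If there are no impulse times in `(s', s)` and `s' < s ≤ t`, then `N*(t,s) = N(t,s')`. -/
lemma star_eq_shift (T : Set ℝ) (s' s t : ℝ) (h1 : s' < s) (h2 : s ≤ t)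
    (hgap : T ∩ Ioo s' s = ∅) : NcountStar T s t = Ncount T s' t := by
  unfold NcountStar Ncount
  congr 1
  ext x
  simp only [mem_inter_iff, mem_Icc, mem_Ioc]
  constructor
  · rintro ⟨hxT, hx1, hx2⟩
    exact ⟨hxT, by linarith, hx2⟩
  · rintro ⟨hxT, hx1, hx2⟩
    refine ⟨hxT, ?_, hx2⟩
    by_contra hlt
    push_neg at hlt
    have hmem : x ∈ T ∩ Ioo s' s := ⟨hxT, by rw [mem_Ioo]; exact ⟨hx1, hlt⟩⟩
    rw [hgap] at hmem
    exact hmem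

/-- If there are no impulse times in `(s, s')`, `s' ∉ T`, and `s < s' ≤ t`,
then `N(t,s) = N*(t,s')`. -/
lemma shift_eq_star (T : Set ℝ) (s s' t : ℝ) (h1 : s < s') (h2 : s' ≤ t)
    (hgap : T ∩ Ioo s s' = ∅) (hs' : s' ∉ T) : Ncount T s t = NcountStar T s' t := by
  unfold NcountStar Ncount
  congr 1
  ext x
  simp only [mem_inter_iff, mem_Icc, mem_Ioc]
  constructor
  · rintro ⟨hxT, hx1, hx2⟩
    refine ⟨hxT, ?_, hx2⟩
    by_contra hlt
    push_neg at hlt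
    have hne : x ≠ s' := by rintro rfl; exact hs' hxT
    have hmem : x ∈ T ∩ Ioo s s' := ⟨hxT, by rw [mem_Ioo]; exact ⟨hx1, lt_of_le_of_ne hlt.le hne⟩⟩
    rw [hgap] at hmem
    exact hmem
  · rintro ⟨hxT, hx1, hx2⟩
    exact ⟨hxT, by linarith, hx2⟩

/-- Lemma 2 of the paper: for `d ≠ 0` and `μ, λ > 0`, the class `S[μ,λ]`
of impulse time sequences satisfying the average dwell-time condition with the half-open
count `N(t,s)` coincides with the class `S*[μ,λ]` defined with the closed count `N*(t,s)`. -/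
theorem stmt3 (c d : ℝ) (hd : d ≠ 0) (t₀ : ℝ) (μ lam : ℝ) (hμ : 0 < μ) (hlam : 0 < lam) :
    {T : Set ℝ | ImpulseTimes t₀ T ∧
        ∀ s t : ℝ, t₀ ≤ s → s ≤ t → -d * (Ncount T s t : ℝ) - (c - lam) * (t - s) ≤ μ} =
    {T : Set ℝ | ImpulseTimes t₀ T ∧
        ∀ s t : ℝ, t₀ ≤ s → s ≤ t → -d * (NcountStar T s t : ℝ) - (c - lam) * (t - s) ≤ μ} := by
  ext T
  simp only [mem_setOf_eq]
  constructor
  · rintro ⟨hT, h1⟩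
    refine ⟨hT, fun s t hs hst => ?_⟩
    by_cases hsT : s ∈ T
    · -- s is an impulse time: shift s slightly to the left
      have hst₀ : t₀ < s := hT.1 s hsT
      refine le_of_forall_pos_le_add (fun δ hδ => ?_)
      obtain ⟨ε, hε, hgap⟩ := gap_left T hT.2 s
      have habs : (0:ℝ) < |c - lam| + 1 := by positivity
      obtain ⟨η, hη0, hη1, hη2, hη3⟩ :
          ∃ η : ℝ, 0 < η ∧ η < ε ∧ η ≤ s - t₀ ∧ η ≤ δ / (|c - lam| + 1) := by
        refine ⟨min (ε / 2) (min (s - t₀) (δ / (|c - lam| + 1))), ?_, ?_, ?_, ?_⟩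
        · apply lt_min (by linarith)
          apply lt_min (by linarith)
          positivity
        · calc min (ε / 2) _ ≤ ε / 2 := min_le_left _ _
            _ < ε := by linarith
        · exact le_trans (min_le_right _ _) (min_le_left _ _)
        · exact le_trans (min_le_right _ _) (min_le_right _ _)
      have hcount : NcountStar T s t = Ncount T (s - η) t := by
        apply star_eq_shift T (s - η) s t (by linarith) hst
        rw [Set.eq_empty_iff_forall_notMem]
        rintro x ⟨hxT, hx⟩
        rw [mem_Ioo] at hx
        have : x ∈ T ∩ Ioo (s - ε) s := ⟨hxT, by rw [mem_Ioo]; constructor <;> linarith [hx.1, hx.2]⟩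
        rw [hgap] at this
        exact this
      have key := h1 (s - η) t (by linarith) (by linarith)
      rw [hcount]
      have h4 : η * (|c - lam| + 1) ≤ δ := by
        rw [← le_div_iff₀ habs] at *
        exact hη3
      have haη : (c - lam) * η ≤ δ := by
        nlinarith [le_abs_self (c - lam), hη0.le, abs_nonneg (c - lam)]
      nlinarith [key]
    · rw [count_eq_of_notMem T s t hsT]
      exact h1 s t hs hst
  · rintro ⟨hT, h2⟩
    refine ⟨hT, fun s t hs hst => ?_⟩
    by_cases hsT : s ∈ T
    · rcases eq_or_lt_of_le hst with rfl | hst'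
      · have h0 : Ncount T s s = 0 := by
          unfold Ncount
          rw [Set.Ioc_self, Set.inter_empty, Set.ncard_empty]
        rw [h0]
        simp only [Nat.cast_zero, sub_self, mul_zero]
        nlinarith
      · refine le_of_forall_pos_le_add (fun δ hδ => ?_)
        obtain ⟨ε, hε, hgap⟩ := gap_right T hT.2 s
        have habs : (0:ℝ) < |c - lam| + 1 := by positivity
        obtain ⟨η, hη0, hη1, hη2, hη3⟩ :
            ∃ η : ℝ, 0 < η ∧ η < ε ∧ η ≤ t - s ∧ η ≤ δ / (|c - lam| + 1) := by
          refine ⟨min (ε / 2) (min ((t - s) / 2) (δ / (|c - lam| + 1))), ?_, ?_, ?_, ?_⟩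
          · apply lt_min (by linarith)
            apply lt_min (by linarith)
            positivity
          · calc min (ε / 2) _ ≤ ε / 2 := min_le_left _ _
              _ < ε := by linarith
          · exact le_trans (le_trans (min_le_right _ _) (min_le_left _ _)) (by linarith)
          · exact le_trans (min_le_right _ _) (min_le_right _ _)
        have hs'T : s + η ∉ T := by
          intro h
          have : s + η ∈ T ∩ Ioo s (s + ε) := ⟨h, by rw [mem_Ioo]; constructor <;> linarith⟩
          rw [hgap] at this
          exact this
        have hcount : Ncount T s t = NcountStar T (s + η) t := by
          apply shift_eq_star T s (s + η) t (by linarith) (by linarith) _ hs'T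
          rw [Set.eq_empty_iff_forall_notMem]
          rintro x ⟨hxT, hx⟩
          rw [mem_Ioo] at hx
          have : x ∈ T ∩ Ioo s (s + ε) :=
            ⟨hxT, by rw [mem_Ioo]; constructor <;> linarith [hx.1, hx.2]⟩
          rw [hgap] at this
          exact this
        have key := h2 (s + η) t (by linarith) (by linarith)
        rw [hcount]
        have h4 : η * (|c - lam| + 1) ≤ δ := by
          rw [← le_div_iff₀ habs] at *
          exact hη3
        have haη : -(c - lam) * η ≤ δ := by
          nlinarith [neg_le_abs (c - lam), hη0.le, abs_nonneg (c - lam)]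
        nlinarith [key]
    · rw [← count_eq_of_notMem T s t hsT]
      exact h2 s t hs hst
end
end

section
/- Let n ∈ ℕ, and for i, j ∈ {1,…,n} let s_i > 0, γ_ij ≥ 0 with γ_ii = 0, d_i ∈ ℝ, and nonnegative reals V_i, w_i, a_i. Let d ∈ ℝ satisfy e^{−d} ≥ e^{−d_i} for all i and e^{−d}·s_i ≥ γ_ij·s_j for all i and all j ≠ i (i.e., d = min over i and j ≠ i of {d_i, −ln((s_j/s_i)·γ_ij)}, terms with γ_ij = 0 omitted). If w_i ≤ max{ e^{−d_i}·V_i, max_{j≠i} γ_ij·V_j, a_i } for every i, then max_i (w_i/s_i) ≤ max{ e^{−d}·max_i (V_i/s_i), max_i (a_i/s_i) }. Consequently, if max_i (V_i/s_i) ≥ e^{d}·max_i (a_i/s_i), then max_i (w_i/s_i) ≤ e^{−d}·max_i (V_i/s_i). -/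
open Set Filter

noncomputable section

/-- the discrete (jump) estimate in the proof of the small-gain theorem
for networks of impulsive systems. -/
theorem stmt11 (n : ℕ) (hn : 0 < n)
    (s V w a : Fin n → ℝ) (γc : Fin n → Fin n → ℝ) (dv : Fin n → ℝ) (d : ℝ)
    (hs : ∀ i, 0 < s i) (hγ : ∀ i j, 0 ≤ γc i j) (hγii : ∀ i, γc i i = 0)
    (hV : ∀ i, 0 ≤ V i) (hw : ∀ i, 0 ≤ w i) (ha : ∀ i, 0 ≤ a i)
    (hd1 : ∀ i, Real.exp (-dv i) ≤ Real.exp (-d))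
    (hd2 : ∀ i j, j ≠ i → γc i j * s j ≤ Real.exp (-d) * s i)
    (hmaj : ∀ i, w i ≤ max (max (Real.exp (-dv i) * V i)
        (⨆ j : {j : Fin n // j ≠ i}, γc i (j : Fin n) * V (j : Fin n))) (a i)) :
    (⨆ i, w i / s i) ≤ max (Real.exp (-d) * ⨆ i, V i / s i) (⨆ i, a i / s i) ∧
    ((Real.exp d * ⨆ i, a i / s i) ≤ (⨆ i, V i / s i) →
      (⨆ i, w i / s i) ≤ Real.exp (-d) * ⨆ i, V i / s i) := by
  have hne : Nonempty (Fin n) := ⟨⟨0, hn⟩⟩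
  have bdd : ∀ f : Fin n → ℝ, BddAbove (Set.range f) :=
    fun f => (Set.finite_range f).bddAbove
  have hsupV0 : 0 ≤ ⨆ i, V i / s i := by
    obtain ⟨i⟩ := hne
    exact le_trans (div_nonneg (hV i) (hs i).le) (le_ciSup (bdd fun j => V j / s j) i)
  have hsupa0 : 0 ≤ ⨆ i, a i / s i := by
    obtain ⟨i⟩ := hne
    exact le_trans (div_nonneg (ha i) (hs i).le) (le_ciSup (bdd fun j => a j / s j) i)
  have hVle : ∀ i, V i / s i ≤ ⨆ i, V i / s i := fun i => le_ciSup (bdd fun j => V j / s j) i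
  have hmain : (⨆ i, w i / s i) ≤ max (Real.exp (-d) * ⨆ i, V i / s i) (⨆ i, a i / s i) := by
    refine ciSup_le fun i => ?_
    rw [div_le_iff₀ (hs i)]
    refine le_trans (hmaj i) ?_
    refine max_le (max_le ?_ ?_) ?_
    · -- exp(-dv i) * V i
      refine le_trans ?_ (mul_le_mul_of_nonneg_right (le_max_left _ _) (hs i).le)
      calc Real.exp (-dv i) * V i ≤ Real.exp (-d) * V i :=
            mul_le_mul_of_nonneg_right (hd1 i) (hV i)
        _ = Real.exp (-d) * (V i / s i) * s i := by
            rw [mul_assoc, div_mul_cancel₀ _ (hs i).ne']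
        _ ≤ Real.exp (-d) * (⨆ i, V i / s i) * s i := by
            refine mul_le_mul_of_nonneg_right
              (mul_le_mul_of_nonneg_left (hVle i) (Real.exp_nonneg _)) (hs i).le
        _ = Real.exp (-d) * (⨆ i, V i / s i) * s i := rfl
    · -- internal gains
      refine le_trans ?_ (mul_le_mul_of_nonneg_right (le_max_left _ _) (hs i).le)
      by_cases hsub : Nonempty {j : Fin n // j ≠ i}
      · refine ciSup_le fun ⟨j, hj⟩ => ?_
        calc γc i j * V j = (γc i j * s j) * (V j / s j) := by
              rw [mul_assoc, ← mul_div_assoc, mul_div_cancel_left₀ _ (hs j).ne']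
          _ ≤ (Real.exp (-d) * s i) * (V j / s j) := by
              refine mul_le_mul_of_nonneg_right (hd2 i j hj)
                (div_nonneg (hV j) (hs j).le)
          _ ≤ (Real.exp (-d) * s i) * (⨆ k, V k / s k) := by
              refine mul_le_mul_of_nonneg_left (hVle j)
                (mul_nonneg (Real.exp_nonneg _) (hs i).le)
          _ = Real.exp (-d) * (⨆ k, V k / s k) * s i := by ring
      · haveI := not_nonempty_iff.mp hsub
        rw [iSup_of_empty']
        simp only [Real.sSup_empty]
        exact mul_nonneg (mul_nonneg (Real.exp_nonneg _) hsupV0) (hs i).le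
    · refine le_trans ?_ (mul_le_mul_of_nonneg_right (le_max_right _ _) (hs i).le)
      calc a i = (a i / s i) * s i := (div_mul_cancel₀ _ (hs i).ne').symm
        _ ≤ (⨆ k, a k / s k) * s i :=
            mul_le_mul_of_nonneg_right (le_ciSup (bdd fun k => a k / s k) i) (hs i).le
  refine ⟨hmain, fun h => ?_⟩
  refine le_trans hmain (max_le le_rfl ?_)
  have := mul_le_mul_of_nonneg_left h (Real.exp_nonneg (-d))
  rwa [← mul_assoc, ← Real.exp_add, neg_add_cancel, Real.exp_zero, one_mul] at this
end
end

section
/- Fix n ∈ ℕ, n ≥ 1, an index i ∈ {1,…,n}, reals a_i > 0 and ε_i ∈ [0, a_i), reals a_ij (j ≠ i), b_i, ν_i ∈ ℝ, a maximal delay θ ≥ 0 and delays τ_ij ∈ [0, θ], and functions e_j: [t−θ, t] → ℝ for j ≠ i and a value e_i(t) ∈ ℝ. If |e_i(t)| ≥ max{ max_{j≠i} (n·|a_ij|/(a_i − ε_i)) · sup_{s∈[t−θ,t]} |e_j(s)|, n·|b_i·ν_i|/(a_i − ε_i) }, then ( −a_i·e_i(t) + Σ_{j≠i} a_ij·e_j(t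 − τ_ij) − b_i·ν_i ) · sign(e_i(t)) ≤ −ε_i·|e_i(t)|. -/
open Set Finset

noncomputable section

lemma self_mul_sign' (x : ℝ) : x * Real.sign x = |x| := by
  rcases lt_trichotomy x 0 with h | h | h
  · rw [Real.sign_of_neg h, abs_of_neg h]; ring
  · simp [h, Real.sign_zero]
  · rw [Real.sign_of_pos h, abs_of_pos h]; ring

lemma abs_sign_le (x : ℝ) : |Real.sign x| ≤ 1 := by
  rcases Real.sign_apply_eq x with h | h | h <;> rw [h] <;> norm_num

/-- the Razumikhin estimate in the networked-control-systems example: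
if `|e_i(t)| ≥ max { max_{j≠i} (n|a_ij|/(a_i-ε_i)) · sup_{[t-θ,t]}|e_j| , n|b_i ν_i|/(a_i-ε_i) }`,
then `(-a_i e_i(t) + Σ_{j≠i} a_ij e_j(t-τ_ij) - b_i ν_i) · sign(e_i(t)) ≤ -ε_i |e_i(t)|`. -/
theorem stmt14 (n : ℕ) (hn : 1 ≤ n) (i : Fin n)
    (a ε : ℝ) (ha : 0 < a) (hε0 : 0 ≤ ε) (hεa : ε < a)
    (A : Fin n → ℝ) (b ν θ : ℝ) (hθ : 0 ≤ θ)
    (τ : Fin n → ℝ) (hτ : ∀ j, τ j ∈ Icc 0 θ)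
    (e : Fin n → ℝ → ℝ) (t : ℝ)
    (hbdd : ∀ j, BddAbove ((fun s => |e j s|) '' Icc (t - θ) t))
    (hyp : max (⨆ j : {j : Fin n // j ≠ i},
          ((n : ℝ) * |A (j : Fin n)| / (a - ε)) * ⨆ s : Icc (t - θ) t, |e (j : Fin n) (s : ℝ)|)
        ((n : ℝ) * |b * ν| / (a - ε)) ≤ |e i t|) :
    (-a * e i t + (∑ j ∈ Finset.univ.erase i, A j * e j (t - τ j)) - b * ν) * Real.sign (e i t)
      ≤ -ε * |e i t| := by
  set E := |e i t| with hEdef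
  have hE0 : 0 ≤ E := abs_nonneg _
  have haε : (0 : ℝ) < a - ε := by linarith
  have hn0 : (0 : ℝ) < n := by exact_mod_cast hn
  -- key bound for each j ≠ i
  have key1 : ∀ j : Fin n, j ≠ i → |A j * e j (t - τ j)| ≤ (a - ε) / n * E := by
    intro j hj
    have hmem : t - τ j ∈ Icc (t - θ) t := by
      constructor
      · linarith [(hτ j).2]
      · linarith [(hτ j).1]
    have hbdd' : BddAbove (Set.range fun s : Icc (t - θ) t => |e j (s : ℝ)|) := by
      have := hbdd j; rwa [Set.image_eq_range] at this
    have hS : |e j (t - τ j)| ≤ ⨆ s : Icc (t - θ) t, |e j (s : ℝ)| :=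
      le_ciSup hbdd' ⟨t - τ j, hmem⟩
    have hS0 : 0 ≤ ⨆ s : Icc (t - θ) t, |e j (s : ℝ)| := le_trans (abs_nonneg _) hS
    have hterm : ((n : ℝ) * |A j| / (a - ε)) * (⨆ s : Icc (t - θ) t, |e j (s : ℝ)|) ≤ E := by
      have hb : BddAbove (Set.range fun j : {j : Fin n // j ≠ i} =>
          ((n : ℝ) * |A (j : Fin n)| / (a - ε)) * ⨆ s : Icc (t - θ) t, |e (j : Fin n) (s : ℝ)|) :=
        Set.Finite.bddAbove (Set.finite_range _)
      calc _ ≤ ⨆ j : {j : Fin n // j ≠ i},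
            ((n : ℝ) * |A (j : Fin n)| / (a - ε)) * ⨆ s : Icc (t - θ) t, |e (j : Fin n) (s : ℝ)| :=
            le_ciSup hb ⟨j, hj⟩
        _ ≤ _ := le_trans (le_max_left _ _) hyp
    rw [abs_mul]
    have h1 : |A j| * |e j (t - τ j)| ≤ |A j| * (⨆ s : Icc (t - θ) t, |e j (s : ℝ)|) :=
      mul_le_mul_of_nonneg_left hS (abs_nonneg _)
    have h2 : (n : ℝ) * (|A j| * (⨆ s : Icc (t - θ) t, |e j (s : ℝ)|)) ≤ (a - ε) * E := by
      have := mul_le_mul_of_nonneg_left hterm (le_of_lt haε)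
      calc (n : ℝ) * (|A j| * (⨆ s : Icc (t - θ) t, |e j (s : ℝ)|))
          = (a - ε) * (((n : ℝ) * |A j| / (a - ε)) * (⨆ s : Icc (t - θ) t, |e j (s : ℝ)|)) := by
            field_simp
        _ ≤ (a - ε) * E := this
    rw [div_mul_eq_mul_div, le_div_iff₀ hn0]
    nlinarith [mul_le_mul_of_nonneg_left h1 hn0.le]
  have key2 : |b * ν| ≤ (a - ε) / n * E := by
    have hterm : (n : ℝ) * |b * ν| / (a - ε) ≤ E := le_trans (le_max_right _ _) hyp
    rw [div_mul_eq_mul_div, le_div_iff₀ hn0]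
    have := mul_le_mul_of_nonneg_left hterm (le_of_lt haε)
    calc |b * ν| * (n : ℝ) = (a - ε) * ((n : ℝ) * |b * ν| / (a - ε)) := by field_simp
      _ ≤ (a - ε) * E := this
  -- sum bound
  have hsum : |(∑ j ∈ Finset.univ.erase i, A j * e j (t - τ j)) - b * ν|
      ≤ (a - ε) * E := by
    have h1 : |∑ j ∈ Finset.univ.erase i, A j * e j (t - τ j)|
        ≤ ∑ j ∈ Finset.univ.erase i, |A j * e j (t - τ j)| :=
      Finset.abs_sum_le_sum_abs _ _
    have h2 : ∑ j ∈ Finset.univ.erase i, |A j * e j (t - τ j)|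
        ≤ ∑ j ∈ Finset.univ.erase i, (a - ε) / n * E := by
      apply Finset.sum_le_sum
      intro j hj
      exact key1 j (Finset.ne_of_mem_erase hj)
    have hcard : (Finset.univ.erase i).card = n - 1 := by
      rw [Finset.card_erase_of_mem (Finset.mem_univ i), Finset.card_univ, Fintype.card_fin]
    have h3 : ∑ j ∈ Finset.univ.erase i, (a - ε) / n * E = ((n : ℝ) - 1) * ((a - ε) / n * E) := by
      rw [Finset.sum_const, hcard, nsmul_eq_mul]
      congr 1
      have : (1 : ℕ) ≤ n := hn
      push_cast [Nat.cast_sub this]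
      ring
    calc |(∑ j ∈ Finset.univ.erase i, A j * e j (t - τ j)) - b * ν|
        ≤ |∑ j ∈ Finset.univ.erase i, A j * e j (t - τ j)| + |b * ν| := abs_sub _ _
      _ ≤ ((n : ℝ) - 1) * ((a - ε) / n * E) + (a - ε) / n * E := by
          have := h1.trans (h2.trans_eq h3); linarith
      _ = (n : ℝ) * ((a - ε) / n * E) := by ring
      _ = (a - ε) * E := by field_simp
  -- combine
  have hmain : (-a * e i t + (∑ j ∈ Finset.univ.erase i, A j * e j (t - τ j)) - b * ν)
      * Real.sign (e i t)
      = -a * E + ((∑ j ∈ Finset.univ.erase i, A j * e j (t - τ j)) - b * ν)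
          * Real.sign (e i t) := by
    have := self_mul_sign' (e i t)
    rw [hEdef]; ring_nf
    nlinarith [self_mul_sign' (e i t)]
  rw [hmain]
  have hrest : ((∑ j ∈ Finset.univ.erase i, A j * e j (t - τ j)) - b * ν)
      * Real.sign (e i t) ≤ (a - ε) * E := by
    calc _ ≤ |((∑ j ∈ Finset.univ.erase i, A j * e j (t - τ j)) - b * ν) * Real.sign (e i t)| :=
          le_abs_self _
      _ = |(∑ j ∈ Finset.univ.erase i, A j * e j (t - τ j)) - b * ν| * |Real.sign (e i t)| :=
          abs_mul _ _
      _ ≤ |(∑ j ∈ Finset.univ.erase i, A j * e j (t - τ j)) - b * ν| * 1 :=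
          mul_le_mul_of_nonneg_left (abs_sign_le _) (abs_nonneg _)
      _ = _ := mul_one _
      _ ≤ (a - ε) * E := hsum
  linarith
end
end

section
/- Let ε_1, ε_2 ∈ (0,1) satisfy (1−ε_1)·(1−ε_2)² > 1/4. Then the interval ( 1/(2(1−ε_2)), √(1−ε_1) ) is nonempty, and for every a in this interval and all x_1, x_2 ∈ ℝ the following hold: (i) if |x_1| ≥ x_2²/a², then (−x_1 + x_2²)·sign(x_1) ≤ −ε_1·|x_1|; (ii) if x_2²/a² ≥ |x_1|, then (2·x_2/a²)·(−x_2 + (1/2)·√|x_1|) ≤ −2·ε_2·x_2²/a². Consequently, along solutions of the coupled system ẋ_1 = −x_1 + x_2², ẋ_2 = −x_2 + (1/2)·√|x_1|, the function V(x) = max{ |x_1|, x_2²/a² } satisfies D⁺V(x) ≤ −min{ε_1, 2ε_2}·V(x). -/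
/-!
Writing `|x₁| = max x₁ (-x₁)`, the function `V = max |x₁| (x₂²/a²)` is a maximum of three
differentiable functions, so it has a genuine right derivative, equal to the derivative of a
branch attaining the maximum; in particular the `limsup` in the Dini derivative is a limit.
On the branches `±x₁` the decay rate `ε₁` comes from `a² < 1 - ε₁`; on the branch `x₂²/a²`,
`√|x₁| ≤ |x₂|/a` and `1 < 2(1 - ε₂)a` give the rate `2ε₂`. Such an `a` exists exactly under
the small-gain condition.
-/

open Set Filter Topology

theorem HasDerivWithinAt.tendsto_slope_zero_right {f : ℝ → ℝ} {f' x : ℝ}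
    (h : HasDerivWithinAt f f' (Ioi x) x) :
    Tendsto (fun t => (f (x + t) - f x) / t) (𝓝[>] 0) (𝓝 f') := by
  rw [hasDerivWithinAt_iff_tendsto_slope' self_notMem_Ioi] at h
  have hshift : Tendsto (fun t => x + t) (𝓝[>] 0) (𝓝[>] x) := by
    have := (map_add_left_nhdsGT (c := x) (a := (0 : ℝ))).le
    rwa [add_zero] at this
  refine (h.comp hshift).congr fun t => ?_
  simp [slope_def_field]

theorem exists_hasDerivWithinAt_Ioi_max {f g : ℝ → ℝ} {f' g' t : ℝ}
    (hf : HasDerivWithinAt f f' (Ioi t) t) (hg : HasDerivWithinAt g g' (Ioi t) t) :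
    ∃ m, HasDerivWithinAt (fun s => max (f s) (g s)) m (Ioi t) t ∧
      (g t ≤ f t ∧ m = f' ∨ f t ≤ g t ∧ m = g') := by
  rcases lt_trichotomy (g t) (f t) with hgf | hfg | hfg
  · refine ⟨f', hf.congr_of_eventuallyEq ?_ (max_eq_left hgf.le), .inl ⟨hgf.le, rfl⟩⟩
    filter_upwards [hg.continuousWithinAt.eventually_lt hf.continuousWithinAt hgf] with s hs
    exact max_eq_left hs.le
  · -- At a tie, the slope of the maximum is the maximum of the slopes.
    have hslope : Tendsto (slope (fun s => max (f s) (g s)) t) (𝓝[>] t) (𝓝 (max f' g')) := by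
      rw [hasDerivWithinAt_iff_tendsto_slope' self_notMem_Ioi] at hf hg
      refine (hf.max hg).congr' ?_
      filter_upwards [self_mem_nhdsWithin] with s (hs : t < s)
      rw [slope_def_field, slope_def_field, slope_def_field, hfg, max_div_div_right
        (sub_pos.2 hs).le, max_sub_sub_right, max_self]
    rw [← hasDerivWithinAt_iff_tendsto_slope' self_notMem_Ioi] at hslope
    rcases le_total g' f' with hg'f' | hf'g'
    · exact ⟨f', max_eq_left hg'f' ▸ hslope, .inl ⟨hfg.le, rfl⟩⟩
    · exact ⟨g', max_eq_right hf'g' ▸ hslope, .inr ⟨hfg.ge, rfl⟩⟩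
  · refine ⟨g', hg.congr_of_eventuallyEq ?_ (max_eq_right hfg.le), .inr ⟨hfg.le, rfl⟩⟩
    filter_upwards [hf.continuousWithinAt.eventually_lt hg.continuousWithinAt hfg] with s hs
    exact max_eq_right hs.le

theorem one_div_lt_sqrt_of_small_gain {ε₁ ε₂ : ℝ} (hε₂ : ε₂ < 1)
    (hsg : 1 / 4 < (1 - ε₁) * (1 - ε₂) ^ 2) : 1 / (2 * (1 - ε₂)) < √(1 - ε₁) := by
  have hε₂' : 0 < 1 - ε₂ := by linarith
  rw [Real.lt_sqrt (by positivity), div_pow, div_lt_iff₀ (by positivity)]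
  linarith

theorem neg_add_sq_le_of_div_sq_le {ε a x y : ℝ} (ha : a ≠ 0) (ha_sq : a ^ 2 ≤ 1 - ε)
    (h : y ^ 2 / a ^ 2 ≤ x) : -x + y ^ 2 ≤ -ε * x := by
  have hx : 0 ≤ x := (by positivity : 0 ≤ y ^ 2 / a ^ 2).trans h
  rw [div_le_iff₀ (by positivity)] at h
  nlinarith

theorem neg_neg_add_sq_le_of_nonpos {ε x y : ℝ} (hε : ε ≤ 1) (hx : x ≤ 0) :
    -(-x + y ^ 2) ≤ -ε * -x := by
  nlinarith [sq_nonneg y]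

theorem neg_add_sq_mul_sign_le {ε a x y : ℝ} (ha : a ≠ 0) (ha_sq : a ^ 2 ≤ 1 - ε)
    (h : y ^ 2 / a ^ 2 ≤ |x|) : (-x + y ^ 2) * Real.sign x ≤ -ε * |x| := by
  rcases lt_trichotomy x 0 with hx | rfl | hx
  · have hε : ε ≤ 1 := by nlinarith [sq_nonneg a]
    rw [Real.sign_of_neg hx, abs_of_neg hx, mul_neg_one]
    exact neg_neg_add_sq_le_of_nonpos hε hx.le
  · simp
  · rw [Real.sign_of_pos hx, mul_one, abs_of_pos hx]
    rw [abs_of_pos hx] at h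
    exact neg_add_sq_le_of_div_sq_le ha ha_sq h

theorem two_mul_div_sq_mul_neg_add_half_sqrt_le {ε a x y : ℝ} (ha : 0 < a)
    (hgain : 1 ≤ 2 * (1 - ε) * a) (h : |x| ≤ y ^ 2 / a ^ 2) :
    2 * y / a ^ 2 * (-y + 1 / 2 * √|x|) ≤ -(2 * ε) * (y ^ 2 / a ^ 2) := by
  have hsqrt : √|x| ≤ |y| / a := by
    calc √|x| ≤ √((|y| / a) ^ 2) := Real.sqrt_le_sqrt (by rwa [div_pow, sq_abs])
      _ = |y| / a := Real.sqrt_sq (by positivity)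
  have hcross : y * √|x| ≤ 2 * (1 - ε) * y ^ 2 := by
    calc y * √|x| ≤ |y| * (|y| / a) :=
          mul_le_mul (le_abs_self y) hsqrt (Real.sqrt_nonneg _) (abs_nonneg y)
      _ = y ^ 2 / a := by rw [mul_div_assoc', ← sq, sq_abs]
      _ ≤ 2 * (1 - ε) * y ^ 2 := by
          rw [div_le_iff₀ ha]; nlinarith [sq_nonneg y]
  calc 2 * y / a ^ 2 * (-y + 1 / 2 * √|x|) = 2 / a ^ 2 * (-y ^ 2 + 1 / 2 * (y * √|x|)) := by
        ring
    _ ≤ 2 / a ^ 2 * (-ε * y ^ 2) := by gcongr; linarith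
    _ = -(2 * ε) * (y ^ 2 / a ^ 2) := by ring

theorem exists_hasDerivWithinAt_Ioi_max_abs_sq_div_le {ε₁ ε₂ a t : ℝ} {x₁ x₂ : ℝ → ℝ}
    (ha : 0 < a) (ha_sq : a ^ 2 ≤ 1 - ε₁) (hgain : 1 ≤ 2 * (1 - ε₂) * a)
    (hx₁ : HasDerivAt x₁ (-x₁ t + x₂ t ^ 2) t)
    (hx₂ : HasDerivAt x₂ (-x₂ t + 1 / 2 * √|x₁ t|) t) :
    ∃ m ≤ -min ε₁ (2 * ε₂) * max |x₁ t| (x₂ t ^ 2 / a ^ 2),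
      HasDerivWithinAt (fun s => max |x₁ s| (x₂ s ^ 2 / a ^ 2)) m (Ioi t) t := by
  have hW : HasDerivAt (fun s => x₂ s ^ 2 / a ^ 2)
      (2 * x₂ t / a ^ 2 * (-x₂ t + 1 / 2 * √|x₁ t|)) t :=
    ((hx₂.fun_pow 2).div_const (a ^ 2)).congr_deriv (by ring)
  obtain ⟨m₁, hV₁, hm₁⟩ :=
    exists_hasDerivWithinAt_Ioi_max hx₁.hasDerivWithinAt hx₁.fun_neg.hasDerivWithinAt
  obtain ⟨m, hV, hm⟩ := exists_hasDerivWithinAt_Ioi_max hV₁ hW.hasDerivWithinAt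
  refine ⟨m, ?_, by simpa only [abs_eq_max_neg] using hV⟩
  have hε₁ : ε₁ ≤ 1 := by nlinarith [sq_nonneg a]
  have hc₁ : min ε₁ (2 * ε₂) ≤ ε₁ := min_le_left _ _
  have hc₂ : min ε₁ (2 * ε₂) ≤ 2 * ε₂ := min_le_right _ _
  rw [abs_eq_max_neg]
  rcases hm with ⟨hact, rfl⟩ | ⟨hact, rfl⟩
  · rw [max_eq_left hact]
    rcases hm₁ with ⟨hact₁, rfl⟩ | ⟨hact₁, rfl⟩
    · rw [max_eq_left hact₁] at hact ⊢
      have hx : 0 ≤ x₁ t := (by positivity : 0 ≤ x₂ t ^ 2 / a ^ 2).trans hact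
      have := neg_add_sq_le_of_div_sq_le ha.ne' ha_sq hact
      nlinarith
    · rw [max_eq_right hact₁]
      have hx : x₁ t ≤ 0 := by linarith
      have := neg_neg_add_sq_le_of_nonpos (y := x₂ t) (hc₁.trans hε₁) hx
      simpa using this
  · rw [max_eq_right hact]
    have := two_mul_div_sq_mul_neg_add_half_sqrt_le ha hgain (by rwa [← abs_eq_max_neg] at hact)
    have hW0 : 0 ≤ x₂ t ^ 2 / a ^ 2 := by positivity
    nlinarith

theorem stmt15_general (ε₁ ε₂ : ℝ) (h2 : ε₂ ∈ Ioo (0 : ℝ) 1)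
    (hsg : 1 / 4 < (1 - ε₁) * (1 - ε₂) ^ 2) :
    1 / (2 * (1 - ε₂)) < Real.sqrt (1 - ε₁) ∧
    ∀ a ∈ Ioo (1 / (2 * (1 - ε₂))) (Real.sqrt (1 - ε₁)),
      (∀ x₁ x₂ : ℝ, x₂ ^ 2 / a ^ 2 ≤ |x₁| →
        (-x₁ + x₂ ^ 2) * Real.sign x₁ ≤ -ε₁ * |x₁|) ∧
      (∀ x₁ x₂ : ℝ, |x₁| ≤ x₂ ^ 2 / a ^ 2 →
        (2 * x₂ / a ^ 2) * (-x₂ + (1 / 2) * Real.sqrt |x₁|) ≤ -(2 * ε₂) * (x₂ ^ 2 / a ^ 2)) ∧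
      (∀ x₁ x₂ : ℝ → ℝ, ∀ t : ℝ,
        HasDerivAt x₁ (-x₁ t + (x₂ t) ^ 2) t →
        HasDerivAt x₂ (-x₂ t + (1 / 2) * Real.sqrt |x₁ t|) t →
        limsup (fun h : ℝ =>
            (max |x₁ (t + h)| ((x₂ (t + h)) ^ 2 / a ^ 2) -
              max |x₁ t| ((x₂ t) ^ 2 / a ^ 2)) / h) (nhdsWithin 0 (Ioi 0)) ≤
          -(min ε₁ (2 * ε₂)) * max |x₁ t| ((x₂ t) ^ 2 / a ^ 2)) := by
  have hε₂ : 0 < 1 - ε₂ := by linarith [h2.2]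
  refine ⟨one_div_lt_sqrt_of_small_gain h2.2 hsg, fun a ⟨ha_low, ha_high⟩ => ?_⟩
  have ha : 0 < a := (by positivity : 0 < 1 / (2 * (1 - ε₂))).trans ha_low
  have ha_sq : a ^ 2 ≤ 1 - ε₁ := ((Real.lt_sqrt ha.le).1 ha_high).le
  have hgain : 1 ≤ 2 * (1 - ε₂) * a := by
    rw [div_lt_iff₀ (by positivity), mul_comm] at ha_low
    exact ha_low.le
  refine ⟨fun x₁ x₂ => neg_add_sq_mul_sign_le ha.ne' ha_sq,
    fun x₁ x₂ => two_mul_div_sq_mul_neg_add_half_sqrt_le ha hgain, fun x₁ x₂ t hx₁ hx₂ => ?_⟩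
  obtain ⟨m, hm, hV⟩ := exists_hasDerivWithinAt_Ioi_max_abs_sq_div_le ha ha_sq hgain hx₁ hx₂
  rw [hV.tendsto_slope_zero_right.limsup_eq]
  exact hm

/-- the nonlinear-gains example. Under the small-gain condition
`(1-ε₁)(1-ε₂)² > 1/4`, the interval `(1/(2(1-ε₂)), √(1-ε₁))` is nonempty and for every `a`
in it the two Lyapunov estimates (i), (ii) hold; consequently `V(x) = max{|x₁|, x₂²/a²}`
has upper right Dini derivative at most `-min{ε₁, 2ε₂}·V` along solutions of the coupled
system `ẋ₁ = -x₁ + x₂²`, `ẋ₂ = -x₂ + ½√|x₁|`. -/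
theorem stmt15 (ε₁ ε₂ : ℝ) (h1 : ε₁ ∈ Ioo (0 : ℝ) 1) (h2 : ε₂ ∈ Ioo (0 : ℝ) 1)
    (hsg : 1 / 4 < (1 - ε₁) * (1 - ε₂) ^ 2) :
    1 / (2 * (1 - ε₂)) < Real.sqrt (1 - ε₁) ∧
    ∀ a ∈ Ioo (1 / (2 * (1 - ε₂))) (Real.sqrt (1 - ε₁)),
      (∀ x₁ x₂ : ℝ, x₂ ^ 2 / a ^ 2 ≤ |x₁| →
        (-x₁ + x₂ ^ 2) * Real.sign x₁ ≤ -ε₁ * |x₁|) ∧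
      (∀ x₁ x₂ : ℝ, |x₁| ≤ x₂ ^ 2 / a ^ 2 →
        (2 * x₂ / a ^ 2) * (-x₂ + (1 / 2) * Real.sqrt |x₁|) ≤ -(2 * ε₂) * (x₂ ^ 2 / a ^ 2)) ∧
      (∀ x₁ x₂ : ℝ → ℝ, ∀ t : ℝ,
        HasDerivAt x₁ (-x₁ t + (x₂ t) ^ 2) t →
        HasDerivAt x₂ (-x₂ t + (1 / 2) * Real.sqrt |x₁ t|) t →
        limsup (fun h : ℝ =>
            (max |x₁ (t + h)| ((x₂ (t + h)) ^ 2 / a ^ 2) -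
              max |x₁ t| ((x₂ t) ^ 2 / a ^ 2)) / h) (nhdsWithin 0 (Ioi 0)) ≤
          -(min ε₁ (2 * ε₂)) * max |x₁ t| ((x₂ t) ^ 2 / a ^ 2)) :=
  stmt15_general ε₁ ε₂ h2 hsg
end
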